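/- Consider unweighted paging with a universe of $n$ pages, and run FiF with all cache sizes simultaneously from nested initial configurations. If the page requested at time $t+1$ lies at position $m_0$ of the Belady ranking at time $t$, then for every $m \geq m_0$ the cache $C^m$ does not fault at time $t+1$ (so $C^m_{t+1} = C^m_t$), and for every $m < m_0$ the cache $C^m$ faults exactly once; consequently the total number of faults over all cache sizes $1, \ldots, n$ at this step equals $m_0 - 1$. -/
import Mathlib



/-- Time of the next request to page `p` strictly after time `t` (`⊤` if never requested again). -/
noncomputable def nextReq (r : ℕ → ℕ) (t p : ℕ) : ℕ∞ :=
  sInf ((fun s : ℕ => (s : ℕ∞)) '' {s : ℕ | t < s ∧ r s = p})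

/-- Tie-breaking key: pages compared by next-request time, ties broken by page id. -/
noncomputable def fifKey (r : ℕ → ℕ) (t p : ℕ) : ℕ∞ ×ₗ ℕ :=
  toLex ((nextReq r t p, p) : ℕ∞ × ℕ)

/-- The page evicted by Farthest-in-Future from cache `C` at time `t`:
the page of `C` whose next request after time `t` is farthest in the future
(ties broken by the fixed rule). -/
noncomputable def victim (r : ℕ → ℕ) (t : ℕ) (C : Finset ℕ) : ℕ :=
  if h : C.Nonempty then
    Classical.choose (C.exists_max_image (fifKey r t) h)
  else 0

/-- One step of Belady's FiF algorithm: serve the request `r (t+1)` from cache `C`. -/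
noncomputable def fifStep (r : ℕ → ℕ) (t : ℕ) (C : Finset ℕ) : Finset ℕ :=
  if r (t+1) ∈ C then C
  else if C = ∅ then C
  else insert (r (t+1)) (C.erase (victim r (t+1) C))

/-- The cache of FiF at time `t`, starting from initial configuration `C0` and
serving requests `r 1, r 2, …`. -/
noncomputable def fifCache (r : ℕ → ℕ) (C0 : Finset ℕ) : ℕ → Finset ℕ
  | 0 => C0
  | t+1 => fifStep r t (fifCache r C0 t)

/-- The position of page `p` in the Belady ranking at time `t`: the least cache size `m`
such that `p` is in the cache of `FiF^m` at time `t`. -/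
noncomputable def beladyPos (r : ℕ → ℕ) (C0 : ℕ → Finset ℕ) (t p : ℕ) : ℕ :=
  sInf {m | p ∈ fifCache r (C0 m) t}

lemma fifKey_inj (r : ℕ → ℕ) (t : ℕ) : Function.Injective (fifKey r t) := by
  intro a b h
  have h2 : ((nextReq r t a, a) : ℕ∞ × ℕ) = (nextReq r t b, b) := by
    simpa [fifKey] using congrArg (fun x => (ofLex x : ℕ∞ × ℕ)) h
  exact (Prod.mk.injEq _ _ _ _).mp h2 |>.2

lemma victim_mem {r : ℕ → ℕ} {t : ℕ} {C : Finset ℕ} (h : C.Nonempty) :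
    victim r t C ∈ C := by
  rw [victim, dif_pos h]
  exact (Classical.choose_spec (C.exists_max_image (fifKey r t) h)).1

lemma victim_max {r : ℕ → ℕ} {t : ℕ} {C : Finset ℕ} (h : C.Nonempty) :
    ∀ b ∈ C, fifKey r t b ≤ fifKey r t (victim r t C) := by
  rw [victim, dif_pos h]
  exact (Classical.choose_spec (C.exists_max_image (fifKey r t) h)).2

lemma fifStep_mono (r : ℕ → ℕ) (t : ℕ) {C D : Finset ℕ} (hCD : C ⊆ D) :
    fifStep r t C ⊆ fifStep r t D := by
  unfold fifStep
  by_cases hpC : r (t+1) ∈ C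
  · rw [if_pos hpC, if_pos (hCD hpC)]; exact hCD
  · rw [if_neg hpC]
    by_cases hC0 : C = ∅
    · simp [hC0]
    · rw [if_neg hC0]
      by_cases hpD : r (t+1) ∈ D
      · rw [if_pos hpD]
        intro x hx
        rcases Finset.mem_insert.mp hx with h | h
        · exact h ▸ hpD
        · exact hCD (Finset.mem_of_mem_erase h)
      · rw [if_neg hpD]
        have hD0 : D ≠ ∅ := fun h => hC0 (Finset.subset_empty.mp (h ▸ hCD))
        rw [if_neg hD0]
        intro x hx
        rcases Finset.mem_insert.mp hx with h | h
        · exact h ▸ Finset.mem_insert_self _ _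
        · obtain ⟨hxv, hxC⟩ := Finset.mem_erase.mp h
          refine Finset.mem_insert_of_mem (Finset.mem_erase.mpr ⟨?_, hCD hxC⟩)
          intro hxeq
          apply hxv
          have hCne : C.Nonempty := Finset.nonempty_iff_ne_empty.mpr hC0
          have hDne : D.Nonempty := Finset.nonempty_iff_ne_empty.mpr hD0
          have h1 := victim_max (r := r) (t := t+1) hCne x hxC
          have h2 := victim_max (r := r) (t := t+1) hDne (victim r (t+1) C) (hCD (victim_mem hCne))
          exact fifKey_inj r (t+1) (le_antisymm h1 (hxeq ▸ h2))

lemma fifCache_mono (r : ℕ → ℕ) {C0 D0 : Finset ℕ} (h : C0 ⊆ D0) :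
    ∀ t, fifCache r C0 t ⊆ fifCache r D0 t := by
  intro t
  induction t with
  | zero => exact h
  | succ t ih => exact fifStep_mono r t ih

lemma fifCache_empty (r : ℕ → ℕ) : ∀ t, fifCache r ∅ t = ∅ := by
  intro t
  induction t with
  | zero => rfl
  | succ t ih =>
    show fifStep r t (fifCache r ∅ t) = ∅
    rw [ih, fifStep]
    simp

lemma fifCache_full (r : ℕ → ℕ) (U : Finset ℕ) (huniv : ∀ s, r s ∈ U) :
    ∀ t, fifCache r U t = U := by
  intro t
  induction t with
  | zero => rfl
  | succ t ih =>
    show fifStep r t (fifCache r U t) = U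
    rw [ih, fifStep, if_pos (huniv (t+1))]

/-- **Faults across all cache sizes.**
If the page requested at time `t+1` lies at position `m₀` of the Belady ranking at time `t`,
then every cache of size `m ≥ m₀` holds the page and does not fault (its configuration is
unchanged), every cache of size `1 ≤ m < m₀` faults, and the total number of faults over
the cache sizes `1, …, n` at this step is exactly `m₀ - 1`. -/
theorem fif_fault_count
    (r : ℕ → ℕ) (C0 : ℕ → Finset ℕ) (n : ℕ)
    (hnest : ∀ m, C0 m ⊆ C0 (m+1)) (hcard : ∀ m, (C0 m).card = m)
    (huniv : ∀ s, r s ∈ C0 n) (t : ℕ) :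
    (∀ m, beladyPos r C0 t (r (t+1)) ≤ m →
      r (t+1) ∈ fifCache r (C0 m) t ∧ fifCache r (C0 m) (t+1) = fifCache r (C0 m) t) ∧
    (∀ m, 1 ≤ m → m < beladyPos r C0 t (r (t+1)) → r (t+1) ∉ fifCache r (C0 m) t) ∧
    ((Finset.Icc 1 n).filter (fun m => r (t+1) ∉ fifCache r (C0 m) t)).card
      = beladyPos r C0 t (r (t+1)) - 1 := by
  set p := r (t+1) with hp
  set S : Set ℕ := {m | p ∈ fifCache r (C0 m) t} with hS
  have hC0mono : ∀ {a b : ℕ}, a ≤ b → C0 a ⊆ C0 b := by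
    intro a b hab
    exact monotone_nat_of_le_succ (fun m => hnest m) hab
  have hnS : n ∈ S := by
    show p ∈ fifCache r (C0 n) t
    rw [fifCache_full r (C0 n) huniv t]
    exact huniv (t+1)
  have hup : ∀ {m : ℕ}, beladyPos r C0 t p ≤ m → m ∈ S := by
    intro m hm
    have h0 : beladyPos r C0 t p ∈ S := Nat.sInf_mem ⟨n, hnS⟩
    exact fifCache_mono r (hC0mono hm) t h0
  refine ⟨?_, ?_, ?_⟩
  · intro m hm
    have hmem : p ∈ fifCache r (C0 m) t := hup hm
    refine ⟨hmem, ?_⟩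
    show fifStep r t (fifCache r (C0 m) t) = fifCache r (C0 m) t
    rw [fifStep, if_pos hmem]
  · intro m _ hlt
    have : m ∉ S := Nat.notMem_of_lt_sInf (show m < sInf S from hlt)
    exact this
  · have hm0n : beladyPos r C0 t p ≤ n := Nat.sInf_le hnS
    have hm01 : 1 ≤ beladyPos r C0 t p := by
      by_contra h
      push_neg at h
      interval_cases h' : beladyPos r C0 t p
      · have h0 : beladyPos r C0 t p ∈ S := Nat.sInf_mem ⟨n, hnS⟩
        rw [h'] at h0
        have hC00 : C0 0 = ∅ := Finset.card_eq_zero.mp (hcard 0)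
        have : p ∈ (∅ : Finset ℕ) := by
          have := h0
          show p ∈ (∅ : Finset ℕ)
          rw [← fifCache_empty r t, ← hC00]
          exact this
        simp at this
    have hfe : (Finset.Icc 1 n).filter (fun m => p ∉ fifCache r (C0 m) t)
        = Finset.Ico 1 (beladyPos r C0 t p) := by
      ext m
      simp only [Finset.mem_filter, Finset.mem_Icc, Finset.mem_Ico]
      constructor
      · rintro ⟨⟨h1, _⟩, h3⟩
        refine ⟨h1, ?_⟩
        by_contra h
        push_neg at h
        exact h3 (hup h)
      · rintro ⟨h1, h2⟩
        refine ⟨⟨h1, le_trans (le_of_lt h2) hm0n⟩, ?_⟩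
        have : m ∉ S := Nat.notMem_of_lt_sInf (show m < sInf S from h2)
        exact this
    rw [hfe, Nat.card_Ico]
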